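/- With the intervals Jₙ and sets L_N as in the Manoussakis–Pelczar-Barwacz construction, the following are equivalent for infinite M, N ⊆ ℕ: (a) ΓL₁(L_M, L_N) < ∞; (b) ΓL₁(L_{M∪N}, L_N) < ∞; (c) M \ N is finite. -/

import Mathlib

open Finset Filter

/-- A Schreier set: a finite set of naturals whose cardinality is at most its minimum
(elements are automatically positive when nonempty). -/
def IsSchreier (F : Finset ℕ) : Prop := ∀ h : F.Nonempty, F.card ≤ F.min' h

/-- A maximal Schreier set: nonempty with cardinality equal to its minimum. -/
def IsMaxSchreier (F : Finset ℕ) : Prop := ∃ h : F.Nonempty, F.card = F.min' h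

/-- A (possibly empty) list of nonempty successive Schreier sets. -/
def SchreierChainList (C : List (Finset ℕ)) : Prop :=
  (∀ F ∈ C, IsSchreier F ∧ F.Nonempty) ∧
  C.Chain' (fun F G => ∀ a ∈ F, ∀ b ∈ G, a < b)

/-- A Schreier chain: a nonempty finite list of nonempty successive Schreier sets. -/
def IsSchreierChain (C : List (Finset ℕ)) : Prop := C ≠ [] ∧ SchreierChainList C

def chainUnion (C : List (Finset ℕ)) : Finset ℕ := C.foldr (· ∪ ·) ∅

noncomputable def mu (p : ℝ) (x : ℕ → ℝ) (F : Finset ℕ) : ℝ :=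
  (∑ n ∈ F, |x n| ^ p) ^ (1 / p)

/-- The p-th Schreier norm of a (finitely supported) sequence. -/
noncomputable def schreierNorm (p : ℝ) (x : ℕ → ℝ) : ℝ :=
  sSup {r | ∃ F : Finset ℕ, IsSchreier F ∧ F.Nonempty ∧ r = mu p x F}

noncomputable def betaNorm (p : ℝ) (x : ℕ → ℝ) (C : List (Finset ℕ)) : ℝ :=
  ((C.map fun F => (∑ n ∈ F, |x n|) ^ p).sum) ^ (1 / p)

/-- The p-th Baernstein norm of a (finitely supported) sequence. -/
noncomputable def baernsteinNorm (p : ℝ) (x : ℕ → ℝ) : ℝ :=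
  sSup {r | ∃ C : List (Finset ℕ), IsSchreierChain C ∧ r = betaNorm p x C}

/-- The Schreier covering number of a finite set. -/
noncomputable def tau1 (A : Finset ℕ) : ℕ :=
  sInf {m | ∃ C : List (Finset ℕ), SchreierChainList C ∧ C.length = m ∧ A ⊆ chainUnion C}

/-- Increasing enumeration of a set of naturals (0-indexed). -/
noncomputable def enumSet (M : Set ℕ) : ℕ → ℕ := Nat.nth (· ∈ M)

/-- `M(J)`: the image of an index set `J` under the increasing enumeration of `M`. -/
noncomputable def subImage (M : Set ℕ) (J : Finset ℕ) : Finset ℕ := J.image (enumSet M)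

/-- The Gasparis–Leung index `ΓL₁(M, N) ∈ ℕ ∪ {∞}`. -/
noncomputable def GLindex (M N : Set ℕ) : ℕ∞ :=
  ⨆ J ∈ {J : Finset ℕ | IsSchreier (subImage N J)}, (tau1 (subImage M J) : ℕ∞)

/-!
If `L_R \ L_N` has `d` elements, the enumeration of `L_N` lags at most `d` places behind that
of `L_R`; so whenever `L_N(J)` is Schreier, `L_R(J)` is covered by `d` singletons and one
Schreier set, and `ΓL₁(L_R, L_N) ≤ d + 1`. Conversely, for `n ∈ R \ N` choose `J` with
`L_R(J) = Gₙ`. Since `#Fₙ = ∑_{m<n} #Jₘ` bounds the number of points of `L_N` below `Gₙ`, the set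
`L_N(J)` lies beyond `Gₙ` and is Schreier, while `Gₙ`, a union of `n` successive maximal Schreier
sets, needs at least `n / 2` Schreier sets to be covered. Both `R = M` and `R = M ∪ N` satisfy
`R \ N = M \ N`.
-/

lemma IsSchreier.card_le_of_mem {E : Finset ℕ} (hE : IsSchreier E) {a : ℕ} (ha : a ∈ E) :
    #E ≤ a :=
  (hE ⟨a, ha⟩).trans (E.min'_le a ha)

lemma isSchreier_singleton {a : ℕ} (ha : 1 ≤ a) : IsSchreier {a} := by
  intro _
  simpa using ha

lemma IsMaxSchreier.one_le {E : Finset ℕ} (hE : IsMaxSchreier E) {a : ℕ} (ha : a ∈ E) :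
    1 ≤ a := by
  obtain ⟨hne, hcard⟩ := hE
  have := E.min'_le a ha
  have := hne.card_pos
  omega

lemma chainUnion_cons (E : Finset ℕ) (C : List (Finset ℕ)) :
    chainUnion (E :: C) = E ∪ chainUnion C := rfl

lemma mem_chainUnion {x : ℕ} {C : List (Finset ℕ)} :
    x ∈ chainUnion C ↔ ∃ E ∈ C, x ∈ E := by
  induction C with
  | nil => simp [chainUnion]
  | cons E C ih => simp [chainUnion_cons, ih]

namespace SchreierChainList

variable {E : Finset ℕ} {C : List (Finset ℕ)}

lemma nil : SchreierChainList [] := ⟨by simp, List.isChain_nil⟩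

lemma cons (hE : IsSchreier E) (hEne : E.Nonempty) (hC : SchreierChainList C)
    (hlt : ∀ a ∈ E, ∀ b ∈ chainUnion C, a < b) : SchreierChainList (E :: C) := by
  refine ⟨?_, hC.2.cons fun D hD a ha b hb =>
    hlt a ha b (mem_chainUnion.2 ⟨D, List.mem_of_mem_head? hD, hb⟩)⟩
  rintro D (_ | ⟨_, hD⟩)
  exacts [⟨hE, hEne⟩, hC.1 D hD]

lemma of_cons (h : SchreierChainList (E :: C)) : SchreierChainList C :=
  ⟨fun D hD => h.1 D (List.mem_cons_of_mem E hD), h.2.tail⟩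

lemma lt_of_cons (h : SchreierChainList (E :: C)) :
    ∀ a ∈ E, ∀ b ∈ chainUnion C, a < b := by
  induction C generalizing E with
  | nil => simp [chainUnion]
  | cons D C ih =>
    intro a ha b hb
    have hED := (List.isChain_cons_cons.1 h.2).1
    rcases mem_union.1 hb with hb | hb
    · exact hED a ha b hb
    · obtain ⟨d, hd⟩ := (h.1 D (by simp)).2
      exact (hED a ha d hd).trans (ih h.of_cons d hd b hb)

lemma mem_of_lt_of_lt (hC : SchreierChainList C) (hE : E ∈ C) {lo x hi : ℕ} (hlo : lo ∈ E)
    (hhi : hi ∈ E) (hx : x ∈ chainUnion C) (h₁ : lo < x) (h₂ : x < hi) : x ∈ E := by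
  induction C with
  | nil => simp at hE
  | cons D C ih =>
    have hlt := hC.lt_of_cons
    rw [chainUnion_cons, mem_union] at hx
    rcases List.mem_cons.1 hE with rfl | hE
    · exact hx.resolve_right fun hx => absurd (hlt hi hhi x hx) (by omega)
    · refine hx.elim (fun hx => absurd (hlt x hx lo (mem_chainUnion.2 ⟨E, hE, hlo⟩)) ?_)
        (ih hC.of_cons hE)
      omega

lemma exists_chainUnion_eq {T : Finset ℕ} (hT : IsSchreier T) (S : Finset ℕ)
    (hS : ∀ a ∈ S, 1 ≤ a) (hST : ∀ a ∈ S, ∀ b ∈ T, a < b) :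
    ∃ C, SchreierChainList C ∧ C.length ≤ #S + 1 ∧ chainUnion C = S ∪ T := by
  induction S using Finset.induction_on_min with
  | empty =>
    by_cases hTne : T.Nonempty
    · exact ⟨[T], nil.cons hT hTne (by simp [chainUnion]), by simp, by simp [chainUnion]⟩
    · exact ⟨[], nil, by simp, by simp [chainUnion, not_nonempty_iff_eq_empty.1 hTne]⟩
  | insert a S haS ih =>
    have haS' : a ∉ S := fun h => lt_irrefl a (haS a h)
    obtain ⟨C, hC, hlen, hunion⟩ := ih (fun b hb => hS b (mem_insert_of_mem hb))
      (fun b hb => hST b (mem_insert_of_mem hb))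
    refine ⟨{a} :: C, hC.cons (isSchreier_singleton (hS a (mem_insert_self a S)))
      (singleton_nonempty a) ?_, ?_, ?_⟩
    · intro a' ha' b hb
      rw [mem_singleton.1 ha']
      rw [hunion, mem_union] at hb
      exact hb.elim (haS b) (hST a (mem_insert_self a S) b)
    · rw [card_insert_of_notMem haS']
      simpa using hlen
    · rw [chainUnion_cons, hunion, insert_eq, union_assoc]

end SchreierChainList

lemma tau1_le_length {A : Finset ℕ} {C : List (Finset ℕ)} (hC : SchreierChainList C)
    (hA : A ⊆ chainUnion C) : tau1 A ≤ C.length :=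
  Nat.sInf_le ⟨C, hC, rfl, hA⟩

lemma tau1_le_card_add_one {A S T : Finset ℕ} (hA : A ⊆ S ∪ T) (hS : ∀ a ∈ S, 1 ≤ a)
    (hST : ∀ a ∈ S, ∀ b ∈ T, a < b) (hT : IsSchreier T) : tau1 A ≤ #S + 1 := by
  obtain ⟨C, hC, hlen, hunion⟩ := SchreierChainList.exists_chainUnion_eq hT S hS hST
  exact (tau1_le_length hC (hunion ▸ hA)).trans hlen

lemma exists_schreierChainList_length_eq_tau1 {A : Finset ℕ} (hA : ∀ a ∈ A, 1 ≤ a) :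
    ∃ C, SchreierChainList C ∧ C.length = tau1 A ∧ A ⊆ chainUnion C := by
  obtain ⟨C, hC, -, hunion⟩ :=
    SchreierChainList.exists_chainUnion_eq (T := ∅) (fun h => absurd h (by simp)) A hA (by simp)
  have hne : {m | ∃ C : List (Finset ℕ), SchreierChainList C ∧ C.length = m ∧
      A ⊆ chainUnion C}.Nonempty := ⟨C.length, C, hC, rfl, by simp [hunion]⟩
  exact Nat.sInf_mem hne

section Blocks

variable {n : ℕ} {H : Fin n → Finset ℕ} {C : List (Finset ℕ)}

/-- If `x i, x j, x k ∈ E` with `i < j < k`, then `H j ⊆ E` by convexity, and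
`#E ≤ min E ≤ x i < min (H j) = #(H j)` is absurd. -/
lemma card_filter_mem_le_two (hmax : ∀ i, IsMaxSchreier (H i))
    (hsucc : ∀ i j : Fin n, i < j → ∀ a ∈ H i, ∀ b ∈ H j, a < b)
    (hC : SchreierChainList C) (hcov : univ.biUnion H ⊆ chainUnion C)
    {x : Fin n → ℕ} (hx : ∀ i, x i ∈ H i) {E : Finset ℕ} (hE : E ∈ C) :
    #{i | x i ∈ E} ≤ 2 := by
  set s : Finset (Fin n) := {i | x i ∈ E}
  rcases s.eq_empty_or_nonempty with hs | hs
  · simp [hs]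
  refine (card_le_card (t := {s.min' hs, s.max' hs}) fun j hj => ?_).trans card_le_two
  by_contra hne
  simp only [mem_insert, mem_singleton, not_or] at hne
  have hlo : x (s.min' hs) ∈ E := (mem_filter.1 (s.min'_mem hs)).2
  have hhi : x (s.max' hs) ∈ E := (mem_filter.1 (s.max'_mem hs)).2
  have hij : s.min' hs < j := lt_of_le_of_ne (s.min'_le j hj) (Ne.symm hne.1)
  have hjk : j < s.max' hs := lt_of_le_of_ne (s.le_max' j hj) hne.2
  have hHjE : H j ⊆ E := fun y hy =>
    hC.mem_of_lt_of_lt hE hlo hhi (hcov (mem_biUnion.2 ⟨j, mem_univ j, hy⟩))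
      (hsucc _ _ hij _ (hx _) y hy) (hsucc _ _ hjk y hy _ (hx _))
  obtain ⟨hHne, hHcard⟩ := hmax j
  have h₁ := (hC.1 E hE).1.card_le_of_mem hlo
  have h₂ := hsucc _ _ hij _ (hx _) _ ((H j).min'_mem hHne)
  have h₃ := card_le_card hHjE
  omega

lemma le_two_mul_length_of_biUnion_subset (hmax : ∀ i, IsMaxSchreier (H i))
    (hsucc : ∀ i j : Fin n, i < j → ∀ a ∈ H i, ∀ b ∈ H j, a < b)
    (hC : SchreierChainList C) (hcov : univ.biUnion H ⊆ chainUnion C) :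
    n ≤ 2 * C.length := by
  choose x hx using fun i => (hmax i).1
  choose E hEC hxE using fun i =>
    mem_chainUnion.1 (hcov (mem_biUnion.2 ⟨i, mem_univ i, hx i⟩))
  calc n = #(univ : Finset (Fin n)) := by simp
    _ ≤ 2 * #C.toFinset :=
      card_le_mul_card_image_of_maps_to (fun i _ => List.mem_toFinset.2 (hEC i)) 2
        fun D hD => (card_le_card (monotone_filter_right _ (by rintro i - rfl; exact hxE i))).trans
          (card_filter_mem_le_two hmax hsucc hC hcov hx (List.mem_toFinset.1 hD))
    _ ≤ 2 * C.length := Nat.mul_le_mul_left 2 C.toFinset_card_le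

lemma le_two_mul_tau1_biUnion (hmax : ∀ i, IsMaxSchreier (H i))
    (hsucc : ∀ i j : Fin n, i < j → ∀ a ∈ H i, ∀ b ∈ H j, a < b) :
    n ≤ 2 * tau1 (univ.biUnion H) := by
  obtain ⟨C, hC, hlen, hcov⟩ := exists_schreierChainList_length_eq_tau1 fun a ha => by
    obtain ⟨i, -, hai⟩ := mem_biUnion.1 ha
    exact (hmax i).one_le hai
  exact hlen ▸ le_two_mul_length_of_biUnion_subset hmax hsucc hC hcov

end Blocks

section Enumeration

variable {P Q : Set ℕ}

lemma enumSet_mem (hP : P.Infinite) (j : ℕ) : enumSet P j ∈ P :=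
  Nat.nth_mem_of_infinite hP j

lemma enumSet_strictMono (hP : P.Infinite) : StrictMono (enumSet P) :=
  Nat.nth_strictMono hP

lemma card_subImage (hP : P.Infinite) (J : Finset ℕ) : #(subImage P J) = #J :=
  card_image_of_injective J (enumSet_strictMono hP).injective

lemma subImage_image_count [DecidablePred (· ∈ P)] {A : Finset ℕ} (hA : ∀ x ∈ A, x ∈ P) :
    subImage P (A.image (Nat.count (· ∈ P))) = A := by
  rw [subImage, image_image]
  exact (image_congr fun x hx => Nat.nth_count (hA x hx)).trans image_id

lemma enumSet_le_enumSet_add (hP : P.Infinite) {D : Finset ℕ} (hD : P \ Q ⊆ D) (j : ℕ) :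
    enumSet Q j ≤ enumSet P (j + #D) := by
  classical
  set x := enumSet P (j + #D)
  have hcountP : Nat.count (· ∈ P) (x + 1) = j + #D + 1 :=
    Nat.count_nth_succ_of_infinite (p := (· ∈ P)) hP _
  have hcount : Nat.count (· ∈ P) (x + 1) ≤ Nat.count (· ∈ Q) (x + 1) + #D := by
    simp only [Nat.count_eq_card_filter_range]
    refine (card_le_card fun y hy => ?_).trans (card_union_le _ _)
    obtain ⟨hyx, hyP⟩ := mem_filter.1 hy
    by_cases hyQ : y ∈ Q
    · exact mem_union_left _ (mem_filter.2 ⟨hyx, hyQ⟩)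
    · exact mem_union_right _ (hD ⟨hyP, hyQ⟩)
  exact Nat.le_of_lt_succ (Nat.nth_lt_of_lt_count (n := x + 1) (by omega))

/-- Split `J` at `min J + #D`: the first part has at most `#D` elements, each covered by a
singleton, and the rest is mapped by `P` onto a Schreier set because `P (j) ≥ Q (j - #D)`. -/
lemma tau1_subImage_le (hP : P.Infinite) (hQ : Q.Infinite) (hP1 : ∀ x ∈ P, 1 ≤ x)
    {D : Finset ℕ} (hD : P \ Q ⊆ D) {J : Finset ℕ} (hJ : IsSchreier (subImage Q J)) :
    tau1 (subImage P J) ≤ #D + 1 := by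
  rcases J.eq_empty_or_nonempty with rfl | hJne
  · exact (tau1_le_length SchreierChainList.nil (by simp [subImage])).trans (Nat.zero_le _)
  set k := J.min' hJne + #D
  have hsplit : subImage P J ⊆ subImage P {j ∈ J | j < k} ∪ subImage P {j ∈ J | k ≤ j} := by
    rw [subImage, subImage, subImage, ← image_union]
    exact image_subset_image fun j hj => (lt_or_ge j k).elim
      (fun h => mem_union_left _ (mem_filter.2 ⟨hj, h⟩))
      (fun h => mem_union_right _ (mem_filter.2 ⟨hj, h⟩))
  refine (tau1_le_card_add_one hsplit ?_ ?_ ?_).trans ?_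
  · intro a ha
    obtain ⟨j, -, rfl⟩ := mem_image.1 ha
    exact hP1 _ (enumSet_mem hP j)
  · intro a ha b hb
    obtain ⟨i, hi, rfl⟩ := mem_image.1 ha
    obtain ⟨j, hj, rfl⟩ := mem_image.1 hb
    exact enumSet_strictMono hP ((mem_filter.1 hi).2.trans_le (mem_filter.1 hj).2)
  · intro hne
    obtain ⟨j, hj, hjmin⟩ := mem_image.1 ((subImage P {j ∈ J | k ≤ j}).min'_mem hne)
    obtain ⟨hjJ, hkj⟩ := mem_filter.1 hj
    calc #(subImage P {j ∈ J | k ≤ j})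
        ≤ #J := card_image_le.trans (card_le_card (filter_subset _ _))
      _ = #(subImage Q J) := (card_subImage hQ J).symm
      _ ≤ enumSet Q (J.min' hJne) := hJ.card_le_of_mem (mem_image_of_mem _ (J.min'_mem hJne))
      _ ≤ enumSet Q (j - #D) := (enumSet_strictMono hQ).monotone (by omega)
      _ ≤ enumSet P (j - #D + #D) := enumSet_le_enumSet_add hP hD _
      _ = _ := by rw [← hjmin, Nat.sub_add_cancel (by omega)]
  · have hsub : {j ∈ J | j < k} ⊆ Ico (J.min' hJne) k := fun j hj =>
      mem_Ico.2 ⟨J.min'_le j (mem_filter.1 hj).1, (mem_filter.1 hj).2⟩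
    have := (card_image_le (f := enumSet P)).trans (card_le_card hsub)
    rw [Nat.card_Ico, Nat.add_sub_cancel_left] at this
    exact Nat.add_le_add_right this 1

lemma GLindex_ne_top_of_finite_diff (hP : P.Infinite) (hQ : Q.Infinite) (hP1 : ∀ x ∈ P, 1 ≤ x)
    (hPQ : (P \ Q).Finite) : GLindex P Q ≠ ⊤ :=
  ne_top_of_le_ne_top (ENat.natCast_ne_top (#hPQ.toFinset + 1)) <| iSup₂_le fun _ hJ => by
    exact_mod_cast tau1_subImage_le hP hQ hP1 (by simp) hJ

lemma GLindex_eq_top_of_forall_exists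
    (h : ∀ B : ℕ, ∃ J, IsSchreier (subImage Q J) ∧ B ≤ tau1 (subImage P J)) :
    GLindex P Q = ⊤ :=
  ENat.eq_top_iff_forall_ge.2 fun B => by
    obtain ⟨J, hJ, hB⟩ := h B
    exact (Nat.cast_le.2 hB).trans <| le_iSup₂
      (f := fun J (_ : J ∈ {J | IsSchreier (subImage Q J)}) => (tau1 (subImage P J) : ℕ∞)) J hJ

end Enumeration

/-- Conditions on the intervals `Fₙ`, `Gₙ` (`n ≥ 1`) of the Manoussakis–Pelczar-Barwacz
construction. -/
structure IsMPBPartition (F G : ℕ → Finset ℕ) : Prop where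
  G_eq_biUnion : ∀ n, 1 ≤ n → ∃ H : Fin n → Finset ℕ, (∀ i, IsMaxSchreier (H i)) ∧
    (∀ i j : Fin n, i < j → ∀ a ∈ H i, ∀ b ∈ H j, a < b) ∧ G n = Finset.univ.biUnion H
  F_lt_G : ∀ n, 1 ≤ n → ∀ a ∈ F n, ∀ b ∈ G n, a < b
  G_lt_F_succ : ∀ n, 1 ≤ n → ∀ a ∈ G n, ∀ b ∈ F (n + 1), a < b
  one_le : ∀ n, 1 ≤ n → ∀ a ∈ F n ∪ G n, 1 ≤ a
  card_F : ∀ n, 2 ≤ n → #(F n) = ∑ m ∈ Ico 1 n, (#(F m) + #(G m))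

/-- `L_R = ⋃_{n ∈ R} Jₙ` with `Jₙ = Fₙ ∪ Gₙ`. -/
def mpbSet (F G : ℕ → Finset ℕ) (R : Set ℕ) : Set ℕ := ⋃ n ∈ R, ↑(F n ∪ G n)

variable {F G : ℕ → Finset ℕ}

lemma mem_mpbSet {R : Set ℕ} {x : ℕ} : x ∈ mpbSet F G R ↔ ∃ n ∈ R, x ∈ F n ∪ G n := by
  simp [mpbSet]

lemma mpbSet_finite {R : Set ℕ} (hR : R.Finite) : (mpbSet F G R).Finite :=
  hR.biUnion fun n _ => (F n ∪ G n).finite_toSet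

lemma mpbSet_diff_subset (R N : Set ℕ) : mpbSet F G R \ mpbSet F G N ⊆ mpbSet F G (R \ N) := by
  rintro x ⟨hxR, hxN⟩
  obtain ⟨n, hnR, hxn⟩ := mem_mpbSet.1 hxR
  exact mem_mpbSet.2 ⟨n, ⟨hnR, fun hnN => hxN (mem_mpbSet.2 ⟨n, hnN, hxn⟩)⟩, hxn⟩

namespace IsMPBPartition

lemma G_nonempty (h : IsMPBPartition F G) {n : ℕ} (hn : 1 ≤ n) : (G n).Nonempty := by
  obtain ⟨H, hmax, -, hG⟩ := h.G_eq_biUnion n hn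
  obtain ⟨a, ha⟩ := (hmax ⟨0, hn⟩).1
  exact ⟨a, hG ▸ mem_biUnion.2 ⟨⟨0, hn⟩, mem_univ _, ha⟩⟩

lemma F_nonempty (h : IsMPBPartition F G) {n : ℕ} (hn : 2 ≤ n) : (F n).Nonempty := by
  rw [← card_pos, h.card_F n hn]
  exact lt_of_lt_of_le (Nat.add_pos_right _ (h.G_nonempty le_rfl).card_pos)
    (single_le_sum (f := fun m => #(F m) + #(G m)) (fun _ _ => Nat.zero_le _)
      (mem_Ico.2 ⟨le_rfl, hn⟩))

lemma lt_of_mem_succ (h : IsMPBPartition F G) {m : ℕ} (hm : 1 ≤ m) {a b : ℕ} (ha : a ∈ F m ∪ G m)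
    (hb : b ∈ F (m + 1) ∪ G (m + 1)) : a < b := by
  obtain ⟨g, hg⟩ := h.G_nonempty hm
  obtain ⟨f, hf⟩ := h.F_nonempty (n := m + 1) (by omega)
  have hGb : ∀ c ∈ G m, c < b := fun c hc => (mem_union.1 hb).elim (h.G_lt_F_succ m hm c hc b)
    fun hb => (h.G_lt_F_succ m hm c hc f hf).trans (h.F_lt_G (m + 1) (by omega) f hf b hb)
  exact (mem_union.1 ha).elim (fun ha => (h.F_lt_G m hm a ha g hg).trans (hGb g hg)) (hGb a)

lemma lt_of_mem_of_lt (h : IsMPBPartition F G) {m n : ℕ} (hm : 1 ≤ m) (hmn : m < n) {a b : ℕ}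
    (ha : a ∈ F m ∪ G m) (hb : b ∈ F n ∪ G n) : a < b := by
  induction n, hmn using Nat.le_induction generalizing b with
  | base => exact h.lt_of_mem_succ hm ha hb
  | succ n hmn ih =>
    obtain ⟨g, hg⟩ := h.G_nonempty (n := n) (by omega)
    exact (ih (mem_union_right _ hg)).trans (h.lt_of_mem_succ (by omega) (mem_union_right _ hg) hb)

lemma le_of_mem (h : IsMPBPartition F G) {n : ℕ} (hn : 1 ≤ n) {a : ℕ} (ha : a ∈ F n ∪ G n) :
    n ≤ a := by
  induction n, hn using Nat.le_induction generalizing a with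
  | base => exact h.one_le 1 le_rfl a ha
  | succ n hn ih =>
    obtain ⟨g, hg⟩ := h.G_nonempty hn
    exact (ih (mem_union_right _ hg)).trans_lt (h.lt_of_mem_succ hn (mem_union_right _ hg) ha)

lemma mpbSet_infinite (h : IsMPBPartition F G) {R : Set ℕ} (hR : R.Infinite)
    (hR1 : ∀ n ∈ R, 1 ≤ n) : (mpbSet F G R).Infinite := by
  refine Set.infinite_of_forall_exists_gt fun a => ?_
  obtain ⟨n, hnR, han⟩ := hR.exists_gt a
  obtain ⟨x, hx⟩ := h.G_nonempty (hR1 n hnR)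
  exact ⟨x, mem_mpbSet.2 ⟨n, hnR, mem_union_right _ hx⟩,
    han.trans_le (h.le_of_mem (hR1 n hnR) (mem_union_right _ hx))⟩

lemma one_le_of_mem_mpbSet (h : IsMPBPartition F G) {R : Set ℕ} (hR1 : ∀ n ∈ R, 1 ≤ n) {x : ℕ}
    (hx : x ∈ mpbSet F G R) : 1 ≤ x := by
  obtain ⟨n, hnR, hxn⟩ := mem_mpbSet.1 hx
  exact h.one_le n (hR1 n hnR) x hxn

/-- Up to a point of `Jₙ` with `n ∉ N`, the set `L_N` only meets the `Jₘ` with `m < n`, which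
together have `#Fₙ` elements. -/
lemma count_mpbSet_le_card_F (h : IsMPBPartition F G) {N : Set ℕ} [DecidablePred (· ∈ mpbSet F G N)]
    (hN1 : ∀ n ∈ N, 1 ≤ n) {n : ℕ} (hn : 2 ≤ n) (hnN : n ∉ N) {b : ℕ} (hb : b ∈ F n ∪ G n) :
    Nat.count (· ∈ mpbSet F G N) (b + 1) ≤ #(F n) := by
  rw [Nat.count_eq_card_filter_range, h.card_F n hn]
  have hsub : {y ∈ range (b + 1) | y ∈ mpbSet F G N} ⊆ (Ico 1 n).biUnion fun m => F m ∪ G m := by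
    intro y hy
    obtain ⟨hyb, hyN⟩ := mem_filter.1 hy
    obtain ⟨m, hmN, hym⟩ := mem_mpbSet.1 hyN
    have hmn : m < n := by
      refine lt_of_le_of_ne (not_lt.1 fun hnm => ?_) (fun hmn => hnN (hmn ▸ hmN))
      have := h.lt_of_mem_of_lt (by omega) hnm hb hym
      have := mem_range.1 hyb
      omega
    exact mem_biUnion.2 ⟨m, mem_Ico.2 ⟨hN1 m hmN, hmn⟩, hym⟩
  exact (card_le_card hsub).trans (card_biUnion_le.trans (sum_le_sum fun m _ => card_union_le _ _))

/-- The witness `J = L_R⁻¹(Gₙ)`: since `Gₙ` sits after `Fₙ` inside `L_R` while `L_N` has at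
most `#Fₙ` points up to `max Gₙ`, `L_N(J)` lies beyond `Gₙ`, so it is Schreier. -/
lemma exists_isSchreier_le_two_mul_tau1 (h : IsMPBPartition F G) {R N : Set ℕ} (hN : N.Infinite)
    (hN1 : ∀ n ∈ N, 1 ≤ n) {n : ℕ} (hn : 2 ≤ n) (hnR : n ∈ R) (hnN : n ∉ N) :
    ∃ J, IsSchreier (subImage (mpbSet F G N) J) ∧ n ≤ 2 * tau1 (subImage (mpbSet F G R) J) := by
  classical
  set P := mpbSet F G R
  set Q := mpbSet F G N
  have hGP : ∀ x ∈ G n, x ∈ P := fun x hx => mem_mpbSet.2 ⟨n, hnR, mem_union_right _ hx⟩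
  obtain ⟨H, hmax, hsucc, hGH⟩ := h.G_eq_biUnion n (by omega)
  refine ⟨(G n).image (Nat.count (· ∈ P)), fun hne => ?_, ?_⟩
  · have hGlt : ∀ x ∈ G n, x < (subImage Q _).min' hne := by
      intro x hx
      obtain ⟨j, hj, hjmin⟩ := mem_image.1 ((subImage Q _).min'_mem hne)
      obtain ⟨y, hy, rfl⟩ := mem_image.1 hj
      have hFy : #(F n) ≤ Nat.count (· ∈ P) y := by
        rw [Nat.count_eq_card_filter_range]
        exact card_le_card fun z hz => mem_filter.2 ⟨mem_range.2 (h.F_lt_G n (by omega) z hz y hy),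
          mem_mpbSet.2 ⟨n, hnR, mem_union_left _ hz⟩⟩
      rw [← hjmin]
      exact (Nat.count_le_iff_le_nth (p := (· ∈ Q)) (h.mpbSet_infinite hN hN1)).1
        ((h.count_mpbSet_le_card_F hN1 hn hnN (mem_union_right _ hx)).trans hFy)
    have hGsub : G n ⊆ Ioo 0 ((subImage Q _).min' hne) := fun x hx =>
      mem_Ioo.2 ⟨h.one_le n (by omega) x (mem_union_right _ hx), hGlt x hx⟩
    have := card_le_card hGsub
    rw [Nat.card_Ioo] at this
    calc #(subImage Q _) ≤ #(G n) := card_image_le.trans card_image_le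
      _ ≤ _ := by omega
  · rw [subImage_image_count hGP, hGH]
    exact le_two_mul_tau1_biUnion hmax hsucc

theorem GLindex_mpbSet_ne_top_iff (h : IsMPBPartition F G) {R N : Set ℕ} (hR : R.Infinite)
    (hR1 : ∀ n ∈ R, 1 ≤ n) (hN : N.Infinite) (hN1 : ∀ n ∈ N, 1 ≤ n) :
    GLindex (mpbSet F G R) (mpbSet F G N) ≠ ⊤ ↔ (R \ N).Finite := by
  refine ⟨fun hne => ?_, fun hfin => ?_⟩
  · by_contra hinf
    refine hne (GLindex_eq_top_of_forall_exists fun B => ?_)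
    obtain ⟨n, ⟨hnR, hnN⟩, hn⟩ := Set.Infinite.exists_gt hinf (2 * B + 1)
    obtain ⟨J, hJ, hle⟩ := h.exists_isSchreier_le_two_mul_tau1 hN hN1 (by omega) hnR hnN
    exact ⟨J, hJ, by omega⟩
  · exact GLindex_ne_top_of_finite_diff (h.mpbSet_infinite hR hR1) (h.mpbSet_infinite hN hN1)
      (fun _ => h.one_le_of_mem_mpbSet hR1) ((mpbSet_finite hfin).subset (mpbSet_diff_subset R N))

end IsMPBPartition

theorem mpb_GLindex_finite_iff_general (F G : ℕ → Finset ℕ)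
    (hGmax : ∀ n, 1 ≤ n → ∃ H : Fin n → Finset ℕ, (∀ i, IsMaxSchreier (H i)) ∧
      (∀ i j : Fin n, i < j → ∀ a ∈ H i, ∀ b ∈ H j, a < b) ∧
      G n = Finset.univ.biUnion H)
    (hFG : ∀ n, 1 ≤ n → ∀ a ∈ F n, ∀ b ∈ G n, a < b)
    (hGF : ∀ n, 1 ≤ n → ∀ a ∈ G n, ∀ b ∈ F (n + 1), a < b)
    (hpos : ∀ n, 1 ≤ n → ∀ a ∈ F n ∪ G n, 1 ≤ a)
    (hcard : ∀ n, 2 ≤ n → (F n).card = ∑ m ∈ Finset.Ico 1 n, ((F m).card + (G m).card))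
    (M N : Set ℕ) (hM : M.Infinite) (hN : N.Infinite)
    (hM1 : ∀ m ∈ M, 1 ≤ m) (hN1 : ∀ n ∈ N, 1 ≤ n) :
    (GLindex (⋃ n ∈ M, ↑(F n ∪ G n)) (⋃ n ∈ N, ↑(F n ∪ G n)) ≠ ⊤ ↔ (M \ N).Finite) ∧
      (GLindex (⋃ n ∈ M ∪ N, ↑(F n ∪ G n)) (⋃ n ∈ N, ↑(F n ∪ G n)) ≠ ⊤ ↔
        (M \ N).Finite) := by
  have h : IsMPBPartition F G := ⟨hGmax, hFG, hGF, hpos, hcard⟩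
  refine ⟨h.GLindex_mpbSet_ne_top_iff hM hM1 hN hN1, ?_⟩
  rw [← Set.union_sdiff_right (s := M) (t := N)]
  exact h.GLindex_mpbSet_ne_top_iff (hM.mono Set.subset_union_left)
    (fun m hm => hm.elim (hM1 m) (hN1 m)) hN hN1

/-- With the MPB intervals Jₙ = Fₙ ∪ Gₙ and L_N = ⋃_{n∈N} Jₙ, the following are
equivalent: ΓL₁(L_M, L_N) < ∞; ΓL₁(L_{M∪N}, L_N) < ∞; M \ N is finite. -/
theorem mpb_GLindex_finite_iff (F G : ℕ → Finset ℕ) (hF1 : F 1 = ∅)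
    (hInt : ∀ n, 1 ≤ n → (∃ a b, F n = Finset.Icc a b) ∧ ∃ a b, G n = Finset.Icc a b)
    (hGmax : ∀ n, 1 ≤ n → ∃ H : Fin n → Finset ℕ, (∀ i, IsMaxSchreier (H i)) ∧
      (∀ i j : Fin n, i < j → ∀ a ∈ H i, ∀ b ∈ H j, a < b) ∧
      G n = Finset.univ.biUnion H)
    (hFG : ∀ n, 1 ≤ n → ∀ a ∈ F n, ∀ b ∈ G n, a < b)
    (hGF : ∀ n, 1 ≤ n → ∀ a ∈ G n, ∀ b ∈ F (n + 1), a < b)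
    (hpos : ∀ n, 1 ≤ n → ∀ a ∈ F n ∪ G n, 1 ≤ a)
    (hcover : ∀ m : ℕ, 1 ≤ m → ∃ n, 1 ≤ n ∧ m ∈ F n ∪ G n)
    (hcard : ∀ n, 2 ≤ n → (F n).card = ∑ m ∈ Finset.Ico 1 n, ((F m).card + (G m).card))
    (M N : Set ℕ) (hM : M.Infinite) (hN : N.Infinite)
    (hM1 : ∀ m ∈ M, 1 ≤ m) (hN1 : ∀ n ∈ N, 1 ≤ n) :
    (GLindex (⋃ n ∈ M, ↑(F n ∪ G n)) (⋃ n ∈ N, ↑(F n ∪ G n)) ≠ ⊤ ↔ (M \ N).Finite) ∧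
      (GLindex (⋃ n ∈ M ∪ N, ↑(F n ∪ G n)) (⋃ n ∈ N, ↑(F n ∪ G n)) ≠ ⊤ ↔
        (M \ N).Finite) :=
  mpb_GLindex_finite_iff_general F G hGmax hFG hGF hpos hcard M N hM hN hM1 hN1
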